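/- arXiv:2507.21643 — 3 statements merged into one kernel-verified Lean document; each statement's English description precedes it below -/
import Mathlib

section
/- Fix a nonnegative integer r and let f : ℝ → ℝ be defined (for t < log 2) by f(t) = (e^t − 1)^r · e^{−(e^t−1)} / (r!·(2 − e^t)). Then for every n ≥ 0, the n-th iterated derivative of f at t = 0 equals the r-partial deranged Bell number w̃_{n,r}; equivalently, ∑_{n≥0} w̃_{n,r} t^n/n! = (e^t−1)^r e^{−(e^t−1)}/(r!(2−e^t)). -/
/-- Stirling numbers of the second kind. -/
def stirling2 : ℕ → ℕ → ℕ
  | 0, 0 => 1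
  | 0, _ + 1 => 0
  | _ + 1, 0 => 0
  | n + 1, k + 1 => (k + 1) * stirling2 n (k + 1) + stirling2 n k

/-- Derangement numbers `d_n = n! ∑_{i=0}^n (-1)^i / i!`. -/
noncomputable def derang (n : ℕ) : ℝ :=
  (n.factorial : ℝ) * ∑ i ∈ Finset.range (n + 1), (-1 : ℝ) ^ i / (i.factorial : ℝ)

/-- Partial derangement numbers `d_{n,r}`. -/
noncomputable def pderang (n r : ℕ) : ℝ :=
  if r ≤ n then (n.choose r : ℝ) * derang (n - r) else 0

/-- Partial deranged Bell numbers `w̃_{n,r}`. -/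
noncomputable def pdb (n r : ℕ) : ℝ :=
  ∑ k ∈ Finset.range (n + 1), (stirling2 n k : ℝ) * pderang k r

/-! With `φ_r(x) = x^r e^{-x} / (1 - x)`, the function is `φ_r(e^t - 1) / r!`. Differentiating
`g(e^t)` gives `∑_k S(n,k) e^{kt} g^{(k)}(e^t)`, since `(e^{kt} g^{(k)}(e^t))' =
k e^{kt} g^{(k)}(e^t) + e^{(k+1)t} g^{(k+1)}(e^t)` reproduces the recurrence of the Stirling
numbers `S(n,k)`; at `t = 0` this reduces the claim to `φ_r^{(k)}(0) = r! d_{k,r}`. By Leibniz's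
rule `φ_r^{(k)}(0) = C(k,r) r! ψ^{(k-r)}(0)` for `ψ(x) = e^{-x} / (1 - x)`, and again by Leibniz
`ψ^{(m)}(0) = ∑_i C(m,i) (-1)^i (m-i)! = d_m`. -/

open Finset Real Topology
open scoped ContDiff Nat

theorem stirling2_eq_stirlingSecond : ∀ n k, stirling2 n k = Nat.stirlingSecond n k
  | 0, 0 | 0, _ + 1 | _ + 1, 0 => rfl
  | n + 1, k + 1 => by
    rw [stirling2, Nat.stirlingSecond_succ_succ, stirling2_eq_stirlingSecond n (k + 1),
      stirling2_eq_stirlingSecond n k]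

theorem Nat.sum_stirlingSecond_succ_mul {R : Type*} [CommSemiring R] (n : ℕ) (a : ℕ → R) :
    ∑ k ∈ range (n + 2), (stirlingSecond (n + 1) k : R) * a k =
      ∑ k ∈ range (n + 1), (stirlingSecond n k : R) * (k * a k + a (k + 1)) := by
  have hshift : ∑ k ∈ range (n + 1), (stirlingSecond n k : R) * (k * a k) =
      ∑ k ∈ range (n + 1), ((k + 1) * stirlingSecond n (k + 1) : R) * a (k + 1) := by
    rw [sum_range_succ', sum_range_succ _ n, stirlingSecond_eq_zero_of_lt n.lt_succ_self]
    simp only [cast_zero, mul_zero, zero_mul, add_zero, cast_add, cast_one]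
    exact sum_congr rfl fun k _ ↦ by ring
  rw [sum_range_succ', stirlingSecond_succ_zero, cast_zero, zero_mul, add_zero]
  simp only [mul_add, sum_add_distrib, hshift]
  rw [← sum_add_distrib]
  exact sum_congr rfl fun k _ ↦ by rw [stirlingSecond_succ_succ]; push_cast; ring

section IteratedDeriv

variable {𝕜 F : Type*} [NontriviallyNormedField 𝕜] [NormedAddCommGroup F] [NormedSpace 𝕜 F]
  {f : 𝕜 → F} {s : Set 𝕜}

theorem ContDiffOn.iteratedDeriv_of_isOpen (hf : ContDiffOn 𝕜 ∞ f s) (hs : IsOpen s) (k : ℕ) :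
    ContDiffOn 𝕜 ∞ (iteratedDeriv k f) s := by
  induction k with
  | zero => simpa
  | succ k ih => rw [iteratedDeriv_succ]; exact ih.deriv_of_isOpen hs (by simp)

theorem ContDiffOn.hasDerivAt_iteratedDeriv (hf : ContDiffOn 𝕜 ∞ f s) (hs : IsOpen s) (k : ℕ)
    {x : 𝕜} (hx : x ∈ s) : HasDerivAt (iteratedDeriv k f) (iteratedDeriv (k + 1) f x) x := by
  rw [iteratedDeriv_succ]
  exact (((hf.iteratedDeriv_of_isOpen hs k).differentiableOn (by simp)).differentiableAt
    (hs.mem_nhds hx)).hasDerivAt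

end IteratedDeriv

theorem iteratedDeriv_comp_exp {g : ℝ → ℝ} {U : Set ℝ} (hU : IsOpen U) (hg : ContDiffOn ℝ ∞ g U)
    (n : ℕ) {t : ℝ} (ht : exp t ∈ U) :
    iteratedDeriv n (fun s ↦ g (exp s)) t =
      ∑ k ∈ range (n + 1),
        (Nat.stirlingSecond n k : ℝ) * (exp (k * t) * iteratedDeriv k g (exp t)) := by
  induction n generalizing t with
  | zero => simp
  | succ n ih =>
    have hterm (k : ℕ) : HasDerivAt (fun s ↦ exp (k * s) * iteratedDeriv k g (exp s))
        (k * (exp (k * t) * iteratedDeriv k g (exp t))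
          + exp ((k + 1 : ℕ) * t) * iteratedDeriv (k + 1) g (exp t)) t := by
      have hexp : HasDerivAt (fun s ↦ exp (k * s)) (exp (k * t) * (k * 1)) t :=
        ((hasDerivAt_id t).const_mul (k : ℝ)).exp
      have hder := (hg.hasDerivAt_iteratedDeriv hU k ht).comp t (hasDerivAt_exp t)
      refine (hexp.mul hder).congr_deriv ?_
      push_cast [Function.comp_apply]
      rw [add_mul, one_mul, exp_add]
      ring
    have hnear : iteratedDeriv n (fun s ↦ g (exp s)) =ᶠ[𝓝 t] fun s ↦ ∑ k ∈ range (n + 1),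
        (Nat.stirlingSecond n k : ℝ) * (exp (k * s) * iteratedDeriv k g (exp s)) :=
      Filter.eventually_of_mem ((hU.preimage continuous_exp).mem_nhds ht) fun s hs ↦ ih hs
    rw [iteratedDeriv_succ, hnear.deriv_eq,
      (HasDerivAt.fun_sum fun k _ ↦ (hterm k).const_mul (Nat.stirlingSecond n k : ℝ)).deriv,
      Nat.sum_stirlingSecond_succ_mul]

theorem iteratedDeriv_comp_exp_sub_one_zero {g : ℝ → ℝ} {U : Set ℝ} (hU : IsOpen U)
    (hg : ContDiffOn ℝ ∞ g U) (h0 : 0 ∈ U) (n : ℕ) :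
    iteratedDeriv n (fun s ↦ g (exp s - 1)) 0 =
      ∑ k ∈ range (n + 1), (Nat.stirlingSecond n k : ℝ) * iteratedDeriv k g 0 := by
  have hshift : ContDiffOn ℝ ∞ (fun x ↦ g (x - 1)) ((· - 1) ⁻¹' U) :=
    hg.comp (contDiffOn_id.sub contDiffOn_const) fun x hx ↦ hx
  simpa [iteratedDeriv_comp_sub_const] using
    iteratedDeriv_comp_exp (hU.preimage (continuous_sub_right 1)) hshift n (t := 0) (by simpa)

theorem iteratedDeriv_pow_mul_zero {𝕜 : Type*} [NontriviallyNormedField 𝕜] {ψ : 𝕜 → 𝕜} {k : ℕ}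
    (hψ : ContDiffAt 𝕜 k ψ 0) (r : ℕ) :
    iteratedDeriv k (fun x ↦ x ^ r * ψ x) 0 =
      if r ≤ k then k.choose r * r ! * iteratedDeriv (k - r) ψ 0 else 0 := by
  rw [iteratedDeriv_fun_mul (contDiffAt_fun_id.pow r) hψ]
  simp only [iteratedDeriv_fun_pow_zero, Nat.cast_ite, Nat.cast_zero, mul_ite, ite_mul,
    mul_zero, zero_mul, sum_ite_eq', mem_range, Nat.lt_succ_iff]

theorem iteratedDeriv_derang_egf (m : ℕ) :
    iteratedDeriv m (fun x ↦ exp (-x) * (1 - x)⁻¹) 0 = derang m := by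
  have hexp (i : ℕ) : iteratedDeriv i (fun x ↦ exp (-x)) 0 = (-1) ^ i := by
    simpa using congrFun (iteratedDeriv_exp_const_mul i (-1)) 0
  have hgeom (j : ℕ) : iteratedDeriv j (fun x : ℝ ↦ (1 - x)⁻¹) 0 = j ! := by
    have h := congrFun (iter_deriv_inv_linear j (-1 : ℝ) 1) 0
    simp only [← iteratedDeriv_eq_iterate, neg_one_mul, neg_add_eq_sub, mul_zero, zero_add,
      one_zpow, mul_one] at h
    rw [h, mul_right_comm, ← mul_pow]
    norm_num
  rw [iteratedDeriv_fun_mul (by fun_prop) (by fun_prop (disch := norm_num)), derang, mul_sum]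
  refine sum_congr rfl fun i hi ↦ ?_
  rw [hexp, hgeom, ← Nat.choose_mul_factorial_mul_factorial (mem_range_succ_iff.mp hi)]
  push_cast
  field_simp

theorem iteratedDeriv_pderang_egf (r k : ℕ) :
    iteratedDeriv k (fun x ↦ x ^ r * (exp (-x) * (1 - x)⁻¹)) 0 = r ! * pderang k r := by
  rw [iteratedDeriv_pow_mul_zero (by fun_prop (disch := norm_num)), pderang,
    iteratedDeriv_derang_egf]
  split_ifs <;> ring

/-- The function `t ↦ (e^t-1)^r e^{-(e^t-1)} / (r! (2-e^t))` is the
exponential generating function of the `r`-partial deranged Bell numbers: its `n`-th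
iterated derivative at `t = 0` equals `w̃_{n,r}`. -/
theorem iteratedDeriv_pdb_egf (r n : ℕ) :
    iteratedDeriv n (fun t : ℝ =>
      (Real.exp t - 1) ^ r * Real.exp (-(Real.exp t - 1)) /
        ((r.factorial : ℝ) * (2 - Real.exp t))) 0 = pdb n r := by
  have hf : (fun t : ℝ => (exp t - 1) ^ r * exp (-(exp t - 1)) / (r ! * (2 - exp t))) =
      fun t ↦ (r ! : ℝ)⁻¹ * (fun x ↦ x ^ r * (exp (-x) * (1 - x)⁻¹)) (exp t - 1) := by
    funext t
    rw [show 2 - exp t = 1 - (exp t - 1) by ring, div_eq_mul_inv, mul_inv]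
    ring
  have hsmooth : ContDiffOn ℝ ∞ (fun x : ℝ ↦ x ^ r * (exp (-x) * (1 - x)⁻¹)) {1}ᶜ := by
    fun_prop (disch := intro x hx; exact sub_ne_zero.mpr (Ne.symm hx))
  rw [hf, iteratedDeriv_const_mul_field,
    iteratedDeriv_comp_exp_sub_one_zero isOpen_compl_singleton hsmooth (by norm_num), pdb, mul_sum]
  refine sum_congr rfl fun k _ ↦ ?_
  rw [iteratedDeriv_pderang_egf, stirling2_eq_stirlingSecond]
  field_simp
end

section
/- For all nonnegative integers n and r and every real (or polynomial variable) y, w̃_{n,r}(y) − (r+1)·w̃_{n,r+1}(y) = y^r · ∑_{k=r}^{n} C(n,k)·{k brace r}·φ_{n−k}(−y). -/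
/-- Partial deranged Bell polynomials `w̃_{n,r}(y)`. -/
noncomputable def pdbPoly (n r : ℕ) (y : ℝ) : ℝ :=
  ∑ k ∈ Finset.range (n + 1), (stirling2 n k : ℝ) * pderang k r * y ^ k

/-- Exponential polynomials `φ_n(y) = ∑_{k=0}^n {n brace k} y^k`. -/
def expPoly (n : ℕ) (y : ℝ) : ℝ :=
  ∑ k ∈ Finset.range (n + 1), (stirling2 n k : ℝ) * y ^ k

lemma stirling2_succ_succ (n k : ℕ) :
    stirling2 (n+1) (k+1) = (k+1) * stirling2 n (k+1) + stirling2 n k := rfl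

lemma stirling2_zero_succ (k : ℕ) : stirling2 0 (k+1) = 0 := rfl
lemma stirling2_succ_zero (n : ℕ) : stirling2 (n+1) 0 = 0 := rfl

lemma stirling2_eq_zero_of_lt : ∀ {n k : ℕ}, n < k → stirling2 n k = 0 := by
  intro n
  induction n with
  | zero =>
    intro k h
    match k, h with
    | k+1, _ => rfl
  | succ n ih =>
    intro k h
    match k, h with
    | k+1, h =>
      rw [stirling2_succ_succ, ih (show n < k+1 by omega), ih (show n < k by omega)]
      ring

lemma derang_zero : derang 0 = 1 := by simp [derang]

lemma derang_succ (m : ℕ) : derang (m+1) = (m+1) * derang m + (-1:ℝ)^(m+1) := by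
  unfold derang
  rw [Finset.sum_range_succ, mul_add]
  have hf : ((m+1).factorial : ℝ) ≠ 0 := Nat.cast_ne_zero.2 (Nat.factorial_ne_zero _)
  have h1 : ((m+1).factorial : ℝ) * ((-1:ℝ)^(m+1) / ((m+1).factorial : ℝ)) = (-1:ℝ)^(m+1) := by
    field_simp
  rw [h1]
  have h2 : ((m+1).factorial : ℝ) = (m+1) * (m.factorial : ℝ) := by
    push_cast [Nat.factorial_succ]; ring
  rw [h2]; ring

lemma pderang_diff (k r : ℕ) :
    pderang k r - (r+1 : ℝ) * pderang k (r+1)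
      = if r ≤ k then (k.choose r : ℝ) * (-1:ℝ)^(k-r) else 0 := by
  by_cases hr : r ≤ k
  · by_cases hr1 : r + 1 ≤ k
    · have hs : k - r = (k - r - 1) + 1 := by omega
      have hs2 : k - (r+1) = k - r - 1 := by omega
      rw [pderang, pderang, if_pos hr, if_pos hr1, if_pos hr, hs2, hs, derang_succ]
      have hcn : k.choose (r+1) * (r+1) = k.choose r * (k - r) := Nat.choose_succ_right_eq k r
      rw [hs] at hcn
      have hc : (k.choose (r+1) : ℝ) * (r+1) = (k.choose r : ℝ) * ((k-r-1 : ℕ) + 1) := by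
        exact_mod_cast congrArg (Nat.cast : ℕ → ℝ) hcn
      push_cast
      linear_combination (-derang (k-r-1)) * hc
    · have hk : k = r := by omega
      subst hk
      rw [pderang, pderang, if_pos hr, if_neg hr1, if_pos hr]
      simp [derang_zero]
  · rw [pderang, pderang, if_neg hr, if_neg (show ¬ r + 1 ≤ k by omega), if_neg hr]
    ring

lemma key_r0 (n j : ℕ) :
    ∑ m ∈ Finset.range (n+1), n.choose m * stirling2 m 0 * stirling2 (n-m) j
      = stirling2 n j := by
  rw [Finset.sum_eq_single_of_mem 0 (by simp)]
  · simp [stirling2]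
  · intro m _ hm
    match m, hm with
    | m+1, _ => simp [stirling2_succ_zero]

lemma key_j0 (n r : ℕ) :
    ∑ m ∈ Finset.range (n+1), n.choose m * stirling2 m r * stirling2 (n-m) 0
      = stirling2 n r := by
  rw [Finset.sum_eq_single_of_mem n (by simp)]
  · simp [stirling2]
  · intro m hm hmn
    have h : n - m = (n - m - 1) + 1 := by
      simp only [Finset.mem_range] at hm; omega
    rw [h, stirling2_succ_zero, mul_zero]

lemma key_sum (n : ℕ) : ∀ r j : ℕ,
    ∑ m ∈ Finset.range (n+1), n.choose m * stirling2 m r * stirling2 (n-m) j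
      = (r+j).choose r * stirling2 n (r+j) := by
  induction n with
  | zero =>
    intro r j
    match r, j with
    | 0, 0 => rfl
    | 0, j+1 => simp [stirling2]
    | r+1, j =>
      have h : (r+1) + j = (r+j) + 1 := by omega
      simp [stirling2, h]
  | succ n ih =>
    intro r j
    match r, j with
    | 0, j => rw [key_r0]; simp
    | r+1, 0 => rw [key_j0]; simp
    | r+1, j+1 =>
      have e1 : ∑ m ∈ Finset.range (n+1+1),
            (n+1).choose m * stirling2 m (r+1) * stirling2 (n+1-m) (j+1)
          = ∑ m ∈ Finset.range (n+1),
            (n+1).choose (m+1) * stirling2 (m+1) (r+1) * stirling2 (n-m) (j+1) := by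
        rw [Finset.sum_range_succ']
        simp [stirling2_zero_succ]
      have e2 : ∀ m ∈ Finset.range (n+1),
          (n+1).choose (m+1) * stirling2 (m+1) (r+1) * stirling2 (n-m) (j+1)
          = ((r+1) * (n.choose m * stirling2 m (r+1) * stirling2 (n-m) (j+1))
              + n.choose m * stirling2 m r * stirling2 (n-m) (j+1))
            + n.choose (m+1) * stirling2 (m+1) (r+1) * stirling2 (n-m) (j+1) := by
        intro m _
        rw [Nat.choose_succ_succ, stirling2_succ_succ]
        ring
      have e3 : ∑ m ∈ Finset.range (n+1),
            n.choose (m+1) * stirling2 (m+1) (r+1) * stirling2 (n-m) (j+1)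
          = ∑ m ∈ Finset.range (n+1),
            n.choose m * stirling2 m (r+1) * stirling2 (n+1-m) (j+1) := by
        have h0 : ∑ m ∈ Finset.range (n+1+1),
              n.choose m * stirling2 m (r+1) * stirling2 (n+1-m) (j+1)
            = ∑ m ∈ Finset.range (n+1),
              n.choose (m+1) * stirling2 (m+1) (r+1) * stirling2 (n-m) (j+1) := by
          rw [Finset.sum_range_succ']
          simp [stirling2_zero_succ]
        have h1 : ∑ m ∈ Finset.range (n+1+1),
              n.choose m * stirling2 m (r+1) * stirling2 (n+1-m) (j+1)
            = ∑ m ∈ Finset.range (n+1),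
              n.choose m * stirling2 m (r+1) * stirling2 (n+1-m) (j+1) := by
          rw [Finset.sum_range_succ, Nat.choose_succ_self]
          simp
        omega
      have e4 : ∀ m ∈ Finset.range (n+1),
          n.choose m * stirling2 m (r+1) * stirling2 (n+1-m) (j+1)
          = (j+1) * (n.choose m * stirling2 m (r+1) * stirling2 (n-m) (j+1))
            + n.choose m * stirling2 m (r+1) * stirling2 (n-m) j := by
        intro m hm
        have h : n+1-m = (n-m)+1 := by
          simp only [Finset.mem_range] at hm; omega
        rw [h, stirling2_succ_succ]
        ring
      rw [e1, Finset.sum_congr rfl e2]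
      rw [Finset.sum_add_distrib, Finset.sum_add_distrib, e3, Finset.sum_congr rfl e4,
        Finset.sum_add_distrib, ← Finset.mul_sum, ← Finset.mul_sum]
      rw [ih (r+1) (j+1), ih r (j+1), ih (r+1) j]
      have h1 : r + (j+1) = r+j+1 := by omega
      have h2 : (r+1) + j = r+j+1 := by omega
      have h3 : (r+1) + (j+1) = (r+j+1)+1 := by omega
      rw [h1, h2, h3, stirling2_succ_succ, Nat.choose_succ_succ (r+j+1) r]
      ring

lemma sum_Icc_shift (f : ℕ → ℝ) (r n : ℕ) :
    ∑ k ∈ Finset.Icc r n, f k = ∑ i ∈ Finset.range (n + 1 - r), f (r + i) := by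
  refine Finset.sum_nbij' (fun k => k - r) (fun i => r + i) ?_ ?_ ?_ ?_ ?_
  · intro k hk; simp only [Finset.mem_Icc] at hk; simp only [Finset.mem_range]; omega
  · intro i hi; simp only [Finset.mem_range] at hi; simp only [Finset.mem_Icc]; omega
  · intro k hk; simp only [Finset.mem_Icc] at hk; show r + (k - r) = k; omega
  · intro i _; show (r + i) - r = i; omega
  · intro k hk; simp only [Finset.mem_Icc] at hk
    show f k = f (r + (k - r)); congr 1; omega

/-- `w̃_{n,r}(y) - (r+1) w̃_{n,r+1}(y) = y^r ∑_{k=r}^n C(n,k) {k brace r} φ_{n-k}(-y)`. -/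
theorem pdbPoly_sub_succ_mul_pdbPoly_succ (n r : ℕ) (y : ℝ) :
    pdbPoly n r y - (r + 1 : ℝ) * pdbPoly n (r + 1) y =
      y ^ r * ∑ k ∈ Finset.Icc r n,
        (n.choose k : ℝ) * (stirling2 k r : ℝ) * expPoly (n - k) (-y) := by
  have hL : pdbPoly n r y - (r + 1 : ℝ) * pdbPoly n (r + 1) y
      = ∑ k ∈ Finset.Icc r n,
          (stirling2 n k : ℝ) * (k.choose r : ℝ) * (-1:ℝ)^(k-r) * y ^ k := by
    unfold pdbPoly
    rw [Finset.mul_sum, ← Finset.sum_sub_distrib]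
    have h1 : ∀ k ∈ Finset.range (n+1),
        (stirling2 n k : ℝ) * pderang k r * y ^ k
          - (r+1:ℝ) * ((stirling2 n k : ℝ) * pderang k (r+1) * y ^ k)
        = if r ≤ k then (stirling2 n k : ℝ) * (k.choose r : ℝ) * (-1:ℝ)^(k-r) * y ^ k
          else 0 := by
      intro k _
      have hd := pderang_diff k r
      by_cases h : r ≤ k
      · rw [if_pos h] at hd ⊢
        linear_combination ((stirling2 n k : ℝ) * y ^ k) * hd
      · rw [if_neg h] at hd ⊢
        linear_combination ((stirling2 n k : ℝ) * y ^ k) * hd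
    rw [Finset.sum_congr rfl h1, ← Finset.sum_filter]
    congr 1
    ext x
    simp only [Finset.mem_filter, Finset.mem_range, Finset.mem_Icc]
    omega
  have hC : ∀ j : ℕ,
      ∑ k ∈ Finset.Icc r n,
          (n.choose k : ℝ) * (stirling2 k r : ℝ) * (stirling2 (n-k) j : ℝ)
        = ((r+j).choose r : ℝ) * (stirling2 n (r+j) : ℝ) := by
    intro j
    have hsub : ∑ k ∈ Finset.Icc r n,
          (n.choose k : ℝ) * (stirling2 k r : ℝ) * (stirling2 (n-k) j : ℝ)
        = ∑ k ∈ Finset.range (n+1),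
          (n.choose k : ℝ) * (stirling2 k r : ℝ) * (stirling2 (n-k) j : ℝ) := by
      apply Finset.sum_subset
      · intro k hk
        simp only [Finset.mem_Icc] at hk
        simp only [Finset.mem_range]
        omega
      · intro k hk hk2
        simp only [Finset.mem_range] at hk
        simp only [Finset.mem_Icc] at hk2
        rw [stirling2_eq_zero_of_lt (show k < r by omega)]
        simp
    rw [hsub]
    have hk := congrArg (Nat.cast : ℕ → ℝ) (key_sum n r j)
    push_cast at hk
    exact hk
  have hR : y ^ r * ∑ k ∈ Finset.Icc r n,
        (n.choose k : ℝ) * (stirling2 k r : ℝ) * expPoly (n - k) (-y)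
      = ∑ j ∈ Finset.range (n - r + 1),
          ((r+j).choose r : ℝ) * (stirling2 n (r+j) : ℝ) * (-1:ℝ)^j * y^(r+j) := by
    have hA : ∀ k ∈ Finset.Icc r n,
        (n.choose k : ℝ) * (stirling2 k r : ℝ) * expPoly (n-k) (-y)
        = ∑ j ∈ Finset.range (n - r + 1),
            (n.choose k : ℝ) * (stirling2 k r : ℝ) * ((stirling2 (n-k) j : ℝ) * (-y)^j) := by
      intro k hk
      simp only [Finset.mem_Icc] at hk
      unfold expPoly
      rw [Finset.mul_sum]
      apply Finset.sum_subset
      · intro j hj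
        simp only [Finset.mem_range] at hj ⊢
        omega
      · intro j _ hj
        simp only [Finset.mem_range, not_lt] at hj
        rw [stirling2_eq_zero_of_lt (show n-k < j by omega)]
        simp
    rw [Finset.sum_congr rfl hA, Finset.sum_comm, Finset.mul_sum]
    refine Finset.sum_congr rfl fun j _ => ?_
    rw [Finset.mul_sum]
    have : ∀ k ∈ Finset.Icc r n,
        y ^ r * ((n.choose k : ℝ) * (stirling2 k r : ℝ) * ((stirling2 (n-k) j : ℝ) * (-y)^j))
        = ((-1:ℝ)^j * y^(r+j)) *
            ((n.choose k : ℝ) * (stirling2 k r : ℝ) * (stirling2 (n-k) j : ℝ)) := by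
      intro k _
      rw [neg_pow]
      ring
    rw [Finset.sum_congr rfl this, ← Finset.mul_sum, hC j]
    ring
  rw [hL, hR, sum_Icc_shift]
  by_cases hrn : r ≤ n
  · rw [show n + 1 - r = n - r + 1 by omega]
    refine Finset.sum_congr rfl fun i _ => ?_
    rw [show r + i - r = i by omega]
    ring
  · rw [show n + 1 - r = 0 by omega, show n - r + 1 = 1 by omega]
    rw [Finset.sum_range_one, Finset.sum_range_zero,
      stirling2_eq_zero_of_lt (show n < r + 0 by omega)]
    simp
end

section
/- For every positive integer n and every real (or polynomial variable) y, ∑_{r=1}^{n} r·w̃_{n,r}(y) = w_n(y). -/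
/-- Geometric polynomials `w_n(y) = ∑_{k=0}^n {n brace k} k! y^k`. -/
def geomPoly (n : ℕ) (y : ℝ) : ℝ :=
  ∑ k ∈ Finset.range (n + 1), (stirling2 n k : ℝ) * (k.factorial : ℝ) * y ^ k

open Finset

private lemma tri_aux (m : ℕ) (f : ℕ → ℕ → ℝ) :
    ∑ k ∈ range (m + 1), ∑ i ∈ range (m + 1 - k), f k i
      = ∑ s ∈ range (m + 1), ∑ i ∈ range (s + 1), f (s - i) i := by
  rw [Finset.sum_sigma', Finset.sum_sigma']
  refine Finset.sum_nbij' (fun x : Σ _ : ℕ, ℕ => (⟨x.1 + x.2, x.2⟩ : Σ _ : ℕ, ℕ))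
    (fun x : Σ _ : ℕ, ℕ => (⟨x.1 - x.2, x.2⟩ : Σ _ : ℕ, ℕ)) ?_ ?_ ?_ ?_ ?_
  · rintro ⟨a, b⟩ h; simp only [Finset.mem_sigma, Finset.mem_range] at h ⊢; omega
  · rintro ⟨a, b⟩ h; simp only [Finset.mem_sigma, Finset.mem_range] at h ⊢; omega
  · rintro ⟨a, b⟩ h; simp only [Nat.add_sub_cancel]
  · rintro ⟨a, b⟩ h; simp only [Finset.mem_sigma, Finset.mem_range] at h
    have : a - b + b = a := by omega
    simp only [this]
  · rintro ⟨a, b⟩ h; simp only [Nat.add_sub_cancel]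

private lemma alt_aux (s : ℕ) (hs : s ≠ 0) :
    ∑ i ∈ range (s + 1), (-1 : ℝ) ^ i * (s.choose i : ℝ) = 0 := by
  have h := Int.alternating_sum_range_choose_of_ne hs
  have := congrArg (fun z : ℤ => (z : ℝ)) h
  push_cast at this
  simpa using this

private lemma keyd (m : ℕ) :
    ∑ j ∈ range (m + 1), (m.choose j : ℝ) * derang (m - j) = (m.factorial : ℝ) := by
  have h1 : ∀ j ∈ range (m + 1), (m.choose j : ℝ) * derang (m - j)
      = ∑ i ∈ range (m + 1 - j),
          ((m.choose j : ℝ) * ((m - j).factorial : ℝ)) * ((-1 : ℝ) ^ i / (i.factorial : ℝ)) := by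
    intro j hj
    rw [mem_range] at hj
    have e : m - j + 1 = m + 1 - j := by omega
    rw [derang, ← e, ← mul_assoc, Finset.mul_sum]
  rw [Finset.sum_congr rfl h1,
    tri_aux m (fun j i =>
      ((m.choose j : ℝ) * ((m - j).factorial : ℝ)) * ((-1 : ℝ) ^ i / (i.factorial : ℝ)))]
  rw [Finset.sum_eq_single 0]
  · simp [Nat.factorial]
  · intro s hs hs0
    rw [mem_range] at hs
    have hterm : ∀ i ∈ range (s + 1),
        ((m.choose (s - i) : ℝ) * ((m - (s - i)).factorial : ℝ)) *
            ((-1 : ℝ) ^ i / (i.factorial : ℝ))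
          = ((m.factorial : ℝ) / (s.factorial : ℝ)) * ((-1 : ℝ) ^ i * (s.choose i : ℝ)) := by
      intro i hi
      rw [mem_range] at hi
      have his : i ≤ s := by omega
      have hsim : s - i ≤ m := by omega
      rw [Nat.cast_choose ℝ hsim, Nat.cast_choose ℝ his]
      have f1 : ((s - i).factorial : ℝ) ≠ 0 := Nat.cast_ne_zero.2 (Nat.factorial_ne_zero _)
      have f2 : ((m - (s - i)).factorial : ℝ) ≠ 0 := Nat.cast_ne_zero.2 (Nat.factorial_ne_zero _)
      have f3 : ((i).factorial : ℝ) ≠ 0 := Nat.cast_ne_zero.2 (Nat.factorial_ne_zero _)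
      have f4 : ((s).factorial : ℝ) ≠ 0 := Nat.cast_ne_zero.2 (Nat.factorial_ne_zero _)
      field_simp
    rw [Finset.sum_congr rfl hterm, ← Finset.mul_sum, alt_aux s hs0, mul_zero]
  · intro h; exact absurd (mem_range.2 (by omega)) h

private lemma pd_inner_sum (n k : ℕ) (hk : k ≤ n) :
    ∑ r ∈ Finset.Icc 1 n, (r : ℝ) * pderang k r
      = if k = 0 then 0 else (k.factorial : ℝ) := by
  have hsub : Finset.Icc 1 k ⊆ Finset.Icc 1 n := Finset.Icc_subset_Icc_right hk
  rw [← Finset.sum_subset hsub (by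
    intro x hx hx'
    rw [Finset.mem_Icc] at hx hx'
    have hxk : ¬ x ≤ k := by omega
    rw [pderang, if_neg hxk, mul_zero])]
  cases k with
  | zero => simp
  | succ m =>
    rw [if_neg (Nat.succ_ne_zero m), ← Finset.Ico_add_one_right_eq_Icc, Finset.sum_Ico_eq_sum_range]
    have hrange : m + 1 + 1 - 1 = m + 1 := by omega
    rw [hrange]
    have hr : ∀ j ∈ range (m + 1), ((1 + j : ℕ) : ℝ) * pderang (m + 1) (1 + j)
        = ((m : ℝ) + 1) * ((m.choose j : ℝ) * derang (m - j)) := by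
      intro j hj
      rw [mem_range] at hj
      have hle : 1 + j ≤ m + 1 := by omega
      rw [pderang, if_pos hle]
      have e1 : m + 1 - (1 + j) = m - j := by omega
      rw [e1]
      have hnat := Nat.add_one_mul_choose_eq m j
      have hcast : ((m : ℝ) + 1) * (m.choose j : ℝ)
          = ((m + 1).choose (j + 1) : ℝ) * ((j : ℝ) + 1) := by
        exact_mod_cast congrArg (Nat.cast : ℕ → ℝ) hnat
      rw [show 1 + j = j + 1 from by omega]
      push_cast
      linear_combination (- derang (m - j)) * hcast
    rw [Finset.sum_congr rfl hr, ← Finset.mul_sum, keyd m, Nat.factorial_succ]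
    push_cast
    ring

/-- For `n ≥ 1`, `∑_{r=1}^n r w̃_{n,r}(y) = w_n(y)`. -/
theorem sum_mul_pdbPoly_eq_geomPoly (n : ℕ) (hn : 1 ≤ n) (y : ℝ) :
    ∑ r ∈ Finset.Icc 1 n, (r : ℝ) * pdbPoly n r y = geomPoly n y := by
  unfold pdbPoly geomPoly
  simp only [Finset.mul_sum]
  rw [Finset.sum_comm]
  refine Finset.sum_congr rfl ?_
  intro k hk
  rw [mem_range] at hk
  have hkn : k ≤ n := by omega
  have hstep : ∑ r ∈ Finset.Icc 1 n, (r : ℝ) * ((stirling2 n k : ℝ) * pderang k r * y ^ k)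
      = ((stirling2 n k : ℝ) * y ^ k) * ∑ r ∈ Finset.Icc 1 n, (r : ℝ) * pderang k r := by
    rw [Finset.mul_sum]
    exact Finset.sum_congr rfl fun r _ => by ring
  rw [hstep, pd_inner_sum n k hkn]
  by_cases hk0 : k = 0
  · subst hk0
    obtain ⟨m, rfl⟩ : ∃ m, n = m + 1 := ⟨n - 1, by omega⟩
    have : stirling2 (m + 1) 0 = 0 := rfl
    simp [this]
  · rw [if_neg hk0]
    ring
end
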